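/- Let n ≥ 3 and let A be the n-dimensional complex (non-associative, commutative) algebra with basis {e_1,…,e_n} and multiplication e_i · e_i = e_{i+1} for 1 ≤ i ≤ n-1, with e_i · e_j = 0 for i ≠ j. Then every local derivation of A is a derivation of A. -/

import Mathlib

/-- On the `n`-dimensional complex commutative non-associative algebra (`n ≥ 3`)
with basis `e_1, …, e_n` and multiplication `e_i · e_i = e_{i+1}` for `i ≤ n - 1`,
`e_i · e_j = 0` for `i ≠ j` (and `e_n · e_n = 0`), every local derivation is a
derivation. Here the basis is indexed by `Fin n`, with `e_i` at index `i - 1`. -/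
theorem stmt_8 (n : ℕ) (hn : 3 ≤ n)
    (A : Type*) [NonUnitalNonAssocRing A] [Module ℂ A]
    [SMulCommClass ℂ A A] [IsScalarTower ℂ A A]
    (e : Module.Basis (Fin n) ℂ A)
    (hsq : ∀ i : Fin n, ∀ h : (i : ℕ) + 1 < n, e i * e i = e ⟨(i : ℕ) + 1, h⟩)
    (hlast : e ⟨n - 1, by omega⟩ * e ⟨n - 1, by omega⟩ = 0)
    (hne : ∀ i j : Fin n, i ≠ j → e i * e j = 0)
    (Δ : A →ₗ[ℂ] A)
    (hΔ : ∀ x : A, ∃ D : A →ₗ[ℂ] A,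
      (∀ y z : A, D (y * z) = D y * z + y * D z) ∧ Δ x = D x) :
    ∀ x y : A, Δ (x * y) = Δ x * y + x * Δ y := by
  have hn1 : n - 1 < n := by omega
  have h0n : 0 < n := by omega
  set L : Fin n := ⟨n - 1, hn1⟩ with hLdef
  set O : Fin n := ⟨0, h0n⟩ with hOdef
  have hLsq : e L * e L = 0 := hlast
  -- coordinate of a scaled basis vector
  have hrep : ∀ (c : ℂ) (k m : Fin n), e.repr (c • e k) m = if k = m then c else 0 := by
    intro c k m
    simp [Finsupp.single_apply]
  -- multiplication by a basis vector from the right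
  have hmulR : ∀ (j : Fin n) (x : A), x * e j = (e.repr x j) • (e j * e j) := by
    intro j
    have h : (LinearMap.mulRight ℂ (e j)) = (e.coord j).smulRight (e j * e j) :=
      e.ext fun k => by
        by_cases hkj : k = j
        · subst hkj; simp
        · simp [hne k j hkj, Finsupp.single_apply, hkj]
    intro x
    simpa using LinearMap.congr_fun h x
  have hmulL : ∀ (j : Fin n) (x : A), e j * x = (e.repr x j) • (e j * e j) := by
    intro j
    have h : (LinearMap.mulLeft ℂ (e j)) = (e.coord j).smulRight (e j * e j) :=
      e.ext fun k => by
        by_cases hkj : k = j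
        · subst hkj; simp
        · simp [hne j k (Ne.symm hkj), Finsupp.single_apply, hkj]
    intro x
    simpa using LinearMap.congr_fun h x
  have hZR : ∀ x : A, x * e L = 0 := fun x => by rw [hmulR, hLsq, smul_zero]
  have hZL : ∀ x : A, e L * x = 0 := fun x => by rw [hmulL, hLsq, smul_zero]
  -- repr of e j * e j away from j+1 is zero
  have hsqr : ∀ (j m : Fin n), (m : ℕ) ≠ (j : ℕ) + 1 → e.repr (e j * e j) m = 0 := by
    intro j m hm
    by_cases hj : (j : ℕ) + 1 < n
    · rw [hsq j hj]
      simp only [Module.Basis.repr_self]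
      rw [Finsupp.single_apply, if_neg (by simp [Fin.ext_iff]; omega)]
    · have hjL : j = L := Fin.ext (by simp [hLdef]; omega)
      rw [hjL, hLsq]; simp
  -- off-diagonal coefficients of a derivation vanish (below the top)
  have D1 : ∀ (D : A →ₗ[ℂ] A), (∀ y z : A, D (y * z) = D y * z + y * D z) →
      ∀ i j : Fin n, i ≠ j → ∀ h : (i : ℕ) + 1 < n, e.repr (D (e j)) i = 0 := by
    intro D hD i j hij h
    have h1 : (0 : A) =
        (e.repr (D (e j)) i) • (e i * e i) + (e.repr (D (e i)) j) • (e j * e j) := by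
      calc (0 : A) = D (e j * e i) := by rw [hne j i (Ne.symm hij), map_zero]
        _ = D (e j) * e i + e j * D (e i) := hD _ _
        _ = _ := by rw [hmulR i (D (e j)), hmulL j (D (e i))]
    have h2 := congrArg (fun z => e.repr z ⟨(i : ℕ) + 1, h⟩) h1
    simp only [map_zero, Finsupp.coe_zero, Pi.zero_apply, map_add, map_smul,
      Finsupp.coe_add, Pi.add_apply, Finsupp.coe_smul, Pi.smul_apply, smul_eq_mul] at h2
    rw [hsq i h, hsqr j ⟨(i : ℕ) + 1, h⟩ (by simp; omega)] at h2
    simp only [Module.Basis.repr_self, Finsupp.single_eq_same, mul_one, mul_zero, add_zero] at h2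
    exact h2.symm
  -- diagonal recursion
  have D2 : ∀ (D : A →ₗ[ℂ] A), (∀ y z : A, D (y * z) = D y * z + y * D z) →
      ∀ (i : Fin n) (h : (i : ℕ) + 1 < n),
      D (e ⟨(i : ℕ) + 1, h⟩) = (2 * e.repr (D (e i)) i) • e ⟨(i : ℕ) + 1, h⟩ := by
    intro D hD i h
    have h1 := hD (e i) (e i)
    rw [hmulR i (D (e i)), hmulL i (D (e i)), hsq i h] at h1
    rw [h1, two_mul, add_smul]
  -- power structure on higher basis vectors
  have D3n : ∀ (D : A →ₗ[ℂ] A), (∀ y z : A, D (y * z) = D y * z + y * D z) →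
      ∀ (m : ℕ) (h : m < n), m ≠ 0 →
      D (e ⟨m, h⟩) = ((2 : ℂ) ^ m * e.repr (D (e O)) O) • e ⟨m, h⟩ := by
    intro D hD m
    induction m with
    | zero => intro h h0; exact absurd rfl h0
    | succ k ih =>
      intro h _
      have hk : k < n := by omega
      have hk1 : ((⟨k, hk⟩ : Fin n) : ℕ) + 1 < n := by simpa using h
      have hstep := D2 D hD ⟨k, hk⟩ hk1
      rcases Nat.eq_zero_or_pos k with hk0 | hk0
      · subst hk0
        calc D (e ⟨0 + 1, h⟩)
            = (2 * e.repr (D (e O)) O) • e ⟨0 + 1, h⟩ := hstep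
          _ = ((2 : ℂ) ^ (0 + 1) * e.repr (D (e O)) O) • e ⟨0 + 1, h⟩ := by norm_num
      · have hrk : e.repr (D (e ⟨k, hk⟩)) ⟨k, hk⟩ = (2 : ℂ) ^ k * e.repr (D (e O)) O := by
          rw [ih hk (by omega), hrep, if_pos rfl]
        rw [show (⟨k+1, h⟩ : Fin n) = ⟨((⟨k, hk⟩ : Fin n) : ℕ) + 1, hk1⟩ from rfl]
        rw [hstep, hrk, ← mul_assoc, ← pow_succ']
  -- structure at the bottom basis vector
  have D0 : ∀ (D : A →ₗ[ℂ] A), (∀ y z : A, D (y * z) = D y * z + y * D z) →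
      D (e O) = (e.repr (D (e O)) O) • e O + (e.repr (D (e O)) L) • e L := by
    intro D hD
    apply e.ext_elem
    intro k
    rw [map_add]
    rw [Finsupp.add_apply, hrep, hrep]
    by_cases hkO : k = O
    · subst hkO
      rw [if_pos rfl, if_neg (by simp [hOdef, hLdef, Fin.ext_iff]; omega)]
      ring
    · by_cases hkL : k = L
      · subst hkL
        rw [if_pos rfl, if_neg (by simp [hOdef, hLdef, Fin.ext_iff]; omega)]
        ring
      · rw [if_neg (fun hh => hkO hh.symm), if_neg (fun hh => hkL hh.symm), add_zero]
        exact D1 D hD k O hkO (by simp [hLdef, hOdef, Fin.ext_iff] at hkL ⊢; omega)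
  obtain ⟨D₀, hD₀, hΔ₀⟩ := hΔ (e O)
  set lam := e.repr (Δ (e O)) O with hlam
  set mu := e.repr (Δ (e O)) L with hmu
  have hΔO : Δ (e O) = lam • e O + mu • e L := by
    have h := D0 D₀ hD₀
    rw [← hΔ₀] at h
    exact h
  have hOL : L ≠ O := by simp [hOdef, hLdef, Fin.ext_iff]; omega
  have hΔmid : ∀ (m : ℕ) (h : m < n), m ≠ 0 → m ≠ n - 1 →
      Δ (e ⟨m, h⟩) = ((2 : ℂ) ^ m * lam) • e ⟨m, h⟩ := by
    intro m h hm0 hmL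
    obtain ⟨Dm, hDm, hxm⟩ := hΔ (e ⟨m, h⟩)
    obtain ⟨D, hD, hx⟩ := hΔ (e O + e ⟨m, h⟩)
    rw [map_add, map_add, hΔO, hxm, D3n Dm hDm m h hm0, D0 D hD, D3n D hD m h hm0] at hx
    have hOm : O ≠ ⟨m, h⟩ := by simp [hOdef, Fin.ext_iff]; omega
    have hLm : L ≠ ⟨m, h⟩ := by simp [hLdef, Fin.ext_iff]; omega
    have h0 := congrArg (fun z => e.repr z O) hx
    have hm2 := congrArg (fun z => e.repr z ⟨m, h⟩) hx
    simp only [map_add, Finsupp.add_apply, hrep, if_pos, if_true, if_neg (Ne.symm hOm),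
      if_neg (Ne.symm hLm), if_neg hOL, if_neg hOm, if_neg hLm, if_neg (Ne.symm hOL),
      add_zero, zero_add] at h0 hm2
    have ham : e.repr (Dm (e O)) O = e.repr (D (e O)) O :=
      mul_left_cancel₀ (pow_ne_zero m two_ne_zero) hm2
    rw [hxm, D3n Dm hDm m h hm0, ham, ← h0]
  have h1n : 1 < n := by omega
  have hΔ1 : Δ (e ⟨1, h1n⟩) = ((2 : ℂ) ^ 1 * lam) • e ⟨1, h1n⟩ :=
    hΔmid 1 h1n (by omega) (by omega)
  have hΔL : Δ (e L) = ((2 : ℂ) ^ (n - 1) * lam) • e L := by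
    obtain ⟨DL, hDL, hxL⟩ := hΔ (e L)
    obtain ⟨D, hD, hx⟩ := hΔ (e ⟨1, h1n⟩ + e L)
    have hDL3 : DL (e L) = ((2 : ℂ) ^ (n - 1) * e.repr (DL (e O)) O) • e L :=
      D3n DL hDL (n - 1) hn1 (by omega)
    have hD3 : D (e L) = ((2 : ℂ) ^ (n - 1) * e.repr (D (e O)) O) • e L :=
      D3n D hD (n - 1) hn1 (by omega)
    have hD1 : D (e ⟨1, h1n⟩) = ((2 : ℂ) ^ 1 * e.repr (D (e O)) O) • e ⟨1, h1n⟩ :=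
      D3n D hD 1 h1n (by omega)
    rw [map_add, map_add, hΔ1, hxL, hDL3, hD1, hD3] at hx
    have h1L : L ≠ ⟨1, h1n⟩ := by simp [hLdef, Fin.ext_iff]; omega
    have h1 := congrArg (fun z => e.repr z ⟨1, h1n⟩) hx
    have hL := congrArg (fun z => e.repr z L) hx
    simp only [map_add, Finsupp.add_apply, hrep, if_pos, if_true, if_neg h1L,
      if_neg (Ne.symm h1L), add_zero, zero_add] at h1 hL
    have ha : lam = e.repr (D (e O)) O :=
      mul_left_cancel₀ (pow_ne_zero 1 two_ne_zero) h1
    have haL : e.repr (DL (e O)) O = e.repr (D (e O)) O :=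
      mul_left_cancel₀ (pow_ne_zero (n - 1) two_ne_zero) hL
    rw [hxL, hDL3, haL, ← ha]
  have hstruct : ∀ i : Fin n, (i : ℕ) ≠ 0 → Δ (e i) = ((2 : ℂ) ^ (i : ℕ) * lam) • e i := by
    intro i hi
    by_cases hiL : (i : ℕ) = n - 1
    · have hiL' : i = L := Fin.ext (by simpa [hLdef] using hiL)
      rw [hiL']
      exact hΔL
    · have h := hΔmid (i : ℕ) i.isLt hi hiL
      rwa [Fin.eta] at h
  -- product rule on basis vectors
  have hrzero : ∀ i j : Fin n, i ≠ j → (e.repr (Δ (e i)) j) • (e j * e j) = 0 := by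
    intro i j hij
    by_cases hjL : (j : ℕ) = n - 1
    · have hjL' : j = L := Fin.ext (by simpa [hLdef] using hjL)
      rw [hjL', hLsq, smul_zero]
    · have hcoef : e.repr (Δ (e i)) j = 0 := by
        by_cases hi0 : (i : ℕ) = 0
        · have hiO : i = O := Fin.ext (by simpa [hOdef] using hi0)
          have hOj : O ≠ j := hiO ▸ hij
          have hLj : L ≠ j := by simp [hLdef, Fin.ext_iff]; omega
          rw [hiO, hΔO, map_add, Finsupp.add_apply, hrep, hrep, if_neg hOj, if_neg hLj,
            add_zero]
        · rw [hstruct i hi0, hrep, if_neg hij]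
      rw [hcoef, zero_smul]
  have hG : ∀ i j : Fin n, Δ (e i * e j) = Δ (e i) * e j + e i * Δ (e j) := by
    intro i j
    by_cases hij : i = j
    · subst hij
      by_cases h : (i : ℕ) + 1 < n
      · have hlhs : Δ (e ⟨(i : ℕ) + 1, h⟩) = ((2 : ℂ) ^ ((i : ℕ) + 1) * lam) • e ⟨(i : ℕ) + 1, h⟩ := by
          have hh := hstruct ⟨(i : ℕ) + 1, h⟩ (by simp)
          simpa using hh
        have hcoef : e.repr (Δ (e i)) i = (2 : ℂ) ^ (i : ℕ) * lam := by
          by_cases hi0 : (i : ℕ) = 0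
          · have hiO : i = O := Fin.ext (by simpa [hOdef] using hi0)
            rw [hiO, hΔO, map_add, Finsupp.add_apply, hrep, hrep, if_pos rfl, if_neg hOL,
              add_zero]
            norm_num [hOdef]
          · rw [hstruct i hi0, hrep, if_pos rfl]
        rw [hsq i h, hlhs, hmulR i (Δ (e i)), hmulL i (Δ (e i)), hsq i h, hcoef, ← add_smul]
        congr 1
        ring
      · have hiL : i = L := Fin.ext (by simp [hLdef]; omega)
        rw [hiL, hLsq, map_zero, hZR, hZL, add_zero]
    · rw [hne i j hij, map_zero, hmulR j (Δ (e i)), hmulL i (Δ (e j)), hrzero i j hij,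
        hrzero j i (Ne.symm hij)]
      simp
  -- bilinear extension
  intro x y
  have hBil : ((LinearMap.mul ℂ A).compr₂ Δ) =
      (LinearMap.mul ℂ A).comp Δ + (LinearMap.mul ℂ A).compl₂ Δ := by
    refine e.ext fun i => e.ext fun j => ?_
    simpa using hG i j
  have hxy := LinearMap.congr_fun (LinearMap.congr_fun hBil x) y
  simpa using hxy
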